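/- Let D be a k-hyperarc-connected directed hypergraph with a fixed vertex r. Suppose X, Y ⊆ V − r are crossing sets, X is inclusion-wise minimal among subsets of V−r with in-degree k, and d⁺(Y) ∈ {k, k+1}. Then d⁺(Y) = k+1 and d⁺(Y − X) = k. -/
import Mathlib


/-- In-degree of a vertex set in a directed hypergraph. -/
def dIn {V : Type*} [DecidableEq V] (A : Multiset (Finset V × V)) (X : Finset V) : ℕ :=
  Multiset.countP (fun a => a.2 ∈ X ∧ (a.1 \ X).Nonempty) A

/-- Out-degree of a vertex set in a directed hypergraph. -/
def dOut {V : Type*} [DecidableEq V] (A : Multiset (Finset V × V)) (X : Finset V) : ℕ :=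
  Multiset.countP (fun a => a.2 ∉ X ∧ (a.1 ∩ X).Nonempty) A

/-- Degree of a vertex set in an undirected hypergraph. -/
def degH {V : Type*} [DecidableEq V] (E : Multiset (Finset V)) (X : Finset V) : ℕ :=
  Multiset.countP (fun Z => (Z ∩ X).Nonempty ∧ (Z \ X).Nonempty) E

/-- `P` is a partition of the vertex set into nonempty parts. -/
def IsPartition {V : Type*} [Fintype V] [DecidableEq V] (P : Finset (Finset V)) : Prop :=
  (∀ X ∈ P, X.Nonempty) ∧ (P : Set (Finset V)).PairwiseDisjoint id ∧
    P.biUnion id = Finset.univ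

/-- Number of hyperedges intersecting at least two members of `P`. -/
def ePart {V : Type*} [DecidableEq V] (E : Multiset (Finset V)) (P : Finset (Finset V)) : ℕ :=
  Multiset.countP (fun Z => 1 < (P.filter (fun X => (Z ∩ X).Nonempty)).card) E

/-- `A` is an orientation of the hypergraph `E`: each hyperedge `X` gets a head `v ∈ X`,
producing the hyperarc `(X − v, v)`. -/
def IsOrientation {V : Type*} [DecidableEq V] (E : Multiset (Finset V))
    (A : Multiset (Finset V × V)) : Prop :=
  A.map (fun a => insert a.2 a.1) = E ∧ ∀ a ∈ A, a.2 ∉ a.1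

/-- `L` is an `(s,t)`-hyperpath in the directed hypergraph `A`. -/
def IsHyperpath {V : Type*} [DecidableEq V] (A : Multiset (Finset V × V)) (s t : V)
    (L : List (Finset V × V)) : Prop :=
  L ≠ [] ∧ (∀ a ∈ L, a ∈ A) ∧ (∀ a ∈ L.head?, s ∈ a.1) ∧ (∀ a ∈ L.getLast?, t = a.2) ∧
    L.Chain' (fun a b => a.2 ∈ b.1) ∧ (L.map Prod.snd).Nodup


lemma dIn_submod {V : Type*} [DecidableEq V] (A : Multiset (Finset V × V)) (X W : Finset V) :
    dIn A (X ∩ W) + dIn A (X ∪ W) ≤ dIn A X + dIn A W := by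
  unfold dIn
  induction A using Multiset.induction_on with
  | empty => simp
  | cons a s ih =>
    simp only [Multiset.countP_cons]
    have hm1 : a.1 \ (X ∪ W) ⊆ a.1 \ X :=
      Finset.sdiff_subset_sdiff (le_refl _) Finset.subset_union_left
    have hm2 : a.1 \ (X ∪ W) ⊆ a.1 \ W :=
      Finset.sdiff_subset_sdiff (le_refl _) Finset.subset_union_right
    have hm3 : a.1 \ (X ∩ W) = (a.1 \ X) ∪ (a.1 \ W) := by
      ext x; simp only [Finset.mem_sdiff, Finset.mem_inter, Finset.mem_union]; tauto
    have key1 : (a.2 ∈ X ∩ W ∧ (a.1 \ (X ∩ W)).Nonempty) →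
        (a.2 ∈ X ∧ (a.1 \ X).Nonempty) ∨ (a.2 ∈ W ∧ (a.1 \ W).Nonempty) := by
      rintro ⟨hv, hne⟩
      obtain ⟨hvX, hvW⟩ := Finset.mem_inter.mp hv
      rw [hm3] at hne
      obtain ⟨x, hx⟩ := hne
      rcases Finset.mem_union.mp hx with hx | hx
      · exact Or.inl ⟨hvX, ⟨x, hx⟩⟩
      · exact Or.inr ⟨hvW, ⟨x, hx⟩⟩
    have key2 : (a.2 ∈ X ∪ W ∧ (a.1 \ (X ∪ W)).Nonempty) →
        (a.2 ∈ X ∧ (a.1 \ X).Nonempty) ∨ (a.2 ∈ W ∧ (a.1 \ W).Nonempty) := by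
      rintro ⟨hv, hne⟩
      rcases Finset.mem_union.mp hv with hv | hv
      · exact Or.inl ⟨hv, hne.mono hm1⟩
      · exact Or.inr ⟨hv, hne.mono hm2⟩
    have key3 : (a.2 ∈ X ∩ W ∧ (a.1 \ (X ∩ W)).Nonempty) →
        (a.2 ∈ X ∪ W ∧ (a.1 \ (X ∪ W)).Nonempty) →
        (a.2 ∈ X ∧ (a.1 \ X).Nonempty) ∧ (a.2 ∈ W ∧ (a.1 \ W).Nonempty) := by
      rintro ⟨hv, -⟩ ⟨-, hne⟩
      obtain ⟨hvX, hvW⟩ := Finset.mem_inter.mp hv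
      exact ⟨⟨hvX, hne.mono hm1⟩, ⟨hvW, hne.mono hm2⟩⟩
    by_cases h1 : a.2 ∈ X ∩ W ∧ (a.1 \ (X ∩ W)).Nonempty <;>
      by_cases h2 : a.2 ∈ X ∪ W ∧ (a.1 \ (X ∪ W)).Nonempty
    · obtain ⟨h3, h4⟩ := key3 h1 h2
      rw [if_pos h1, if_pos h2, if_pos h3, if_pos h4]; omega
    · rw [if_pos h1, if_neg h2]
      rcases key1 h1 with h | h
      · rw [if_pos h]; split_ifs <;> omega
      · rw [if_pos h]; split_ifs <;> omega
    · rw [if_neg h1, if_pos h2]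
      rcases key2 h2 with h | h
      · rw [if_pos h]; split_ifs <;> omega
      · rw [if_pos h]; split_ifs <;> omega
    · rw [if_neg h1, if_neg h2]; split_ifs <;> omega

lemma dOut_eq_dIn_compl {V : Type*} [Fintype V] [DecidableEq V]
    (A : Multiset (Finset V × V)) (Y : Finset V) :
    dOut A Y = dIn A (Finset.univ \ Y) := by
  unfold dOut dIn
  induction A using Multiset.induction_on with
  | empty => simp
  | cons a s ih =>
    simp only [Multiset.countP_cons, ih]
    congr 1
    have h2 : a.1 \ (Finset.univ \ Y) = a.1 ∩ Y := by ext x; simp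
    simp only [h2, Finset.mem_sdiff, Finset.mem_univ, true_and]

/-- If `X` is minimal in-tight, `Y` crosses `X` with `d⁺(Y) ∈ {k, k+1}`,
then `d⁺(Y) = k+1` and `d⁺(Y − X) = k`. -/
theorem minimal_inTight_crossing_dangerous
    {V : Type*} [Fintype V] [DecidableEq V] (A : Multiset (Finset V × V)) (k : ℕ) (r : V)
    (hconn : ∀ W : Finset V, W.Nonempty → W ≠ Finset.univ → k ≤ dIn A W)
    (X Y : Finset V)
    (hX : X ⊆ Finset.univ \ {r}) (hY : Y ⊆ Finset.univ \ {r})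
    (hXY : (X ∩ Y).Nonempty) (hXuY : X ∪ Y ≠ Finset.univ)
    (hXdY : (X \ Y).Nonempty) (hYdX : (Y \ X).Nonempty)
    (hdX : dIn A X = k)
    (hmin : ∀ X' : Finset V, X' ⊆ X → X' ≠ X → X'.Nonempty → dIn A X' ≠ k)
    (hdY : dOut A Y = k ∨ dOut A Y = k + 1) :
    dOut A Y = k + 1 ∧ dOut A (Y \ X) = k := by
  have hrX : r ∉ X := fun h => by simpa using hX h
  have hrY : r ∉ Y := fun h => by simpa using hY h
  have hXW : X ∩ (Finset.univ \ Y) = X \ Y := by ext x; simp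
  have hXuW : X ∪ (Finset.univ \ Y) = Finset.univ \ (Y \ X) := by
    ext x
    simp only [Finset.mem_union, Finset.mem_sdiff, Finset.mem_univ, true_and]
    tauto
  have hsub := dIn_submod A X (Finset.univ \ Y)
  rw [hXW, hXuW, hdX] at hsub
  have e1 : dOut A Y = dIn A (Finset.univ \ Y) := dOut_eq_dIn_compl A Y
  have e2 : dOut A (Y \ X) = dIn A (Finset.univ \ (Y \ X)) := dOut_eq_dIn_compl A _
  have h1 : k + 1 ≤ dIn A (X \ Y) := by
    have hnu : X \ Y ≠ Finset.univ := by
      intro h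
      have : r ∈ X \ Y := by rw [h]; exact Finset.mem_univ r
      exact hrX (Finset.mem_sdiff.mp this).1
    have hk := hconn _ hXdY hnu
    have hne2 : dIn A (X \ Y) ≠ k := by
      apply hmin _ Finset.sdiff_subset _ hXdY
      intro h
      obtain ⟨x, hx⟩ := hXY
      obtain ⟨hx1, hx2⟩ := Finset.mem_inter.mp hx
      have : x ∈ X \ Y := by rw [h]; exact hx1
      exact (Finset.mem_sdiff.mp this).2 hx2
    omega
  have h2 : k ≤ dIn A (Finset.univ \ (Y \ X)) := by
    apply hconn
    · exact ⟨r, by simp [hrY]⟩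
    · intro h
      obtain ⟨y, hy⟩ := hYdX
      have : y ∈ Finset.univ \ (Y \ X) := by rw [h]; exact Finset.mem_univ y
      exact (Finset.mem_sdiff.mp this).2 hy
  omega
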